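/- arXiv:2101.11428 — 4 statements merged into one kernel-verified Lean document; each statement's English description precedes it below -/
import Mathlib

section
/- Let Σ_Θ, S be positive definite, Σ_Y = A Σ_Θ Aᵀ + S, Q = (Aᵀ S⁻¹ A + Σ_Θ⁻¹)⁻¹, and R = Q Aᵀ S⁻¹. Then A Q Aᵀ = S − S Σ_Y⁻¹ S. -/
open Matrix

/-- With `Σ_Y = A Σ_Θ Aᵀ + S`, `Q = (AᵀS⁻¹A + Σ_Θ⁻¹)⁻¹` and `R = Q Aᵀ S⁻¹`,
we have `A Q Aᵀ = S − S Σ_Y⁻¹ S`. -/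
theorem stmt8 {m n : ℕ} (A : Matrix (Fin n) (Fin m) ℝ)
    (SigΘ : Matrix (Fin m) (Fin m) ℝ) (S : Matrix (Fin n) (Fin n) ℝ)
    (hSigΘ : SigΘ.PosDef) (hS : S.PosDef)
    (SigY : Matrix (Fin n) (Fin n) ℝ) (hSigY : SigY = A * SigΘ * Aᵀ + S)
    (Q : Matrix (Fin m) (Fin m) ℝ) (hQ : Q = (Aᵀ * S⁻¹ * A + SigΘ⁻¹)⁻¹)
    (R : Matrix (Fin m) (Fin n) ℝ) (hR : R = Q * Aᵀ * S⁻¹) :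
    A * Q * Aᵀ = S - S * SigY⁻¹ * S := by
  have hAT : Aᴴ = Aᵀ := by
    ext i j; simp [conjTranspose, RCLike.star_def]
  have hsemi : (Aᵀ * S⁻¹ * A).PosSemidef := by
    rw [← hAT]; exact hS.inv.posSemidef.conjTranspose_mul_mul_same A
  have hM : (SigΘ⁻¹ + Aᵀ * S⁻¹ * A).PosDef := Matrix.PosDef.add_posSemidef hSigΘ.inv hsemi
  have hQ' : Q = (SigΘ⁻¹ + Aᵀ * S⁻¹ * A)⁻¹ := by rw [hQ, add_comm]
  have hSigY' : SigY = S + A * SigΘ * Aᵀ := by rw [hSigY, add_comm]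
  have hW : SigY⁻¹ = S⁻¹ - S⁻¹ * A * Q * Aᵀ * S⁻¹ := by
    rw [hSigY', Matrix.add_mul_mul_inv_eq_sub S A SigΘ Aᵀ hS.isUnit hSigΘ.isUnit
      (by simpa [Matrix.mul_assoc] using hM.isUnit), hQ']
  have hSu : S * S⁻¹ = 1 := Matrix.mul_nonsing_inv S ((Matrix.isUnit_iff_isUnit_det S).1 hS.isUnit)
  have hSu' : S⁻¹ * S = 1 := Matrix.nonsing_inv_mul S ((Matrix.isUnit_iff_isUnit_det S).1 hS.isUnit)
  rw [hW]
  rw [Matrix.mul_sub, Matrix.sub_mul, hSu]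
  rw [Matrix.one_mul, sub_sub_cancel,
    show S * (S⁻¹ * A * Q * Aᵀ * S⁻¹) * S = S * S⁻¹ * A * Q * Aᵀ * (S⁻¹ * S) by
      simp only [Matrix.mul_assoc],
    hSu, hSu', Matrix.one_mul, Matrix.mul_one]
end

section
/- Let Θ ~ N(μ_Θ, Σ_Θ), Y|Θ ~ N(AΘ, S), and let the variational family be p_φ(θ|y) = N(θ; R_φ y + b_φ, Q_φ). The minimizer of the ELBO loss E_{Y}E^φ_{Θ|Y}[log(p_φ(θ|y)/p(θ))] + E_{Y}E^φ_{Θ|Y}[−log p(y|θ)] over (R_φ, b_φ, Q_φ) with Q_φ positive definite is given by Q_φ = (Aᵀ S⁻¹ A + Σ_Θ⁻¹)⁻¹, R_φ = Q_φ Aᵀ S⁻¹, b_φ = Q_φ Σ_Θ⁻¹ μ_Θ, i.e., the exact Bayes posterior. -/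
/-!
Bayes' rule for the linear Gaussian model, `p(θ) p(y|θ) = p(θ|y) p(y)`, with posterior
`N(Q_φ Aᵀ S⁻¹ y + Q_φ Σ_Θ⁻¹ μ_Θ, Q_φ)`, rewrites the inner integrand as
`log (p_φ(θ|y) / p(θ|y)) - log p(y)`. The loss of an encoder is therefore
`E_Y[KL(p_φ(·|y) ‖ p(·|y))]` plus the entropy of `Y`, which does not depend on the encoder;
Gibbs' inequality makes the first term nonnegative, and it vanishes at the posterior.

Every integrand met on the way is a Gaussian density times a quadratic polynomial. The
substitution `x = L u + μ` with `L Lᵀ = Q` reduces such integrals to the moments `1`, `0`, `δᵢⱼ`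
of the standard Gaussian on `ℝᵏ`, a product of one-dimensional ones; this gives both their
integrability and the closed form of the Gaussian KL divergence needed to integrate it over `y`.
-/

open Matrix MeasureTheory Real

noncomputable def gpdf {n : ℕ} (μ : Fin n → ℝ) (S : Matrix (Fin n) (Fin n) ℝ)
    (x : Fin n → ℝ) : ℝ :=
  (Real.sqrt ((2 * Real.pi) ^ n * S.det))⁻¹ *
    Real.exp (-(1 / 2 : ℝ) * ((x - μ) ⬝ᵥ (S⁻¹ *ᵥ (x - μ))))

/-- The ELBO loss of the Gaussian encoder `p_φ(θ|y) = N(R y + b, Q)`: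
`E_Y E^φ_{Θ|Y}[log(p_φ(θ|y)/p(θ))] + E_Y E^φ_{Θ|Y}[−log p(y|θ)]`, where
`Y ~ N(AμΘ, AΣΘAᵀ + S)` is the Gaussian data marginal. -/
noncomputable def elboLoss {m n : ℕ} (μΘ : Fin m → ℝ) (SigΘ : Matrix (Fin m) (Fin m) ℝ)
    (A : Matrix (Fin n) (Fin m) ℝ) (S : Matrix (Fin n) (Fin n) ℝ)
    (R : Matrix (Fin m) (Fin n) ℝ) (b : Fin m → ℝ) (Q : Matrix (Fin m) (Fin m) ℝ) : ℝ :=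
  ∫ y : Fin n → ℝ, gpdf (A *ᵥ μΘ) (A * SigΘ * Aᵀ + S) y *
    ∫ θ : Fin m → ℝ, gpdf (R *ᵥ y + b) Q θ *
      (Real.log (gpdf (R *ᵥ y + b) Q θ / gpdf μΘ SigΘ θ) - Real.log (gpdf (A *ᵥ θ) S y))

section Basic
variable {k l : ℕ} {Q N : Matrix (Fin k) (Fin k) ℝ}

lemma transpose_eq_of_posDef (hQ : Q.PosDef) : Qᵀ = Q :=
  (isHermitian_iff_isSymm.mp hQ.isHermitian).eq

lemma mulVec_dotProduct (A : Matrix (Fin k) (Fin l) ℝ) (x : Fin l → ℝ) (y : Fin k → ℝ) :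
    (A *ᵥ x) ⬝ᵥ y = x ⬝ᵥ Aᵀ *ᵥ y := by
  rw [dotProduct_transpose_mulVec, dotProduct_comm]

lemma quadForm_mulVec (B : Matrix (Fin k) (Fin l) ℝ) (N : Matrix (Fin k) (Fin k) ℝ)
    (b : Fin l → ℝ) : (B *ᵥ b) ⬝ᵥ N *ᵥ (B *ᵥ b) = b ⬝ᵥ (Bᵀ * N * B) *ᵥ b := by
  rw [mulVec_dotProduct, mulVec_mulVec, mulVec_mulVec, Matrix.mul_assoc]

lemma quadForm_add (hN : Nᵀ = N) (z d : Fin k → ℝ) :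
    (z + d) ⬝ᵥ N *ᵥ (z + d) = d ⬝ᵥ N *ᵥ d + 2 * ((N *ᵥ d) ⬝ᵥ z) + z ⬝ᵥ N *ᵥ z := by
  have hcross : d ⬝ᵥ N *ᵥ z = z ⬝ᵥ N *ᵥ d := by
    rw [← dotProduct_transpose_mulVec, hN]
  rw [mulVec_add, dotProduct_add, add_dotProduct, add_dotProduct, hcross,
    dotProduct_comm (N *ᵥ d)]
  ring

lemma quadForm_sub_mulVec (hN : Nᵀ = N) (a : Fin k → ℝ) (B : Matrix (Fin k) (Fin l) ℝ)
    (b : Fin l → ℝ) :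
    (a - B *ᵥ b) ⬝ᵥ N *ᵥ (a - B *ᵥ b)
      = a ⬝ᵥ N *ᵥ a - 2 * (a ⬝ᵥ (N * B) *ᵥ b) + b ⬝ᵥ (Bᵀ * N * B) *ᵥ b := by
  have hcross : (B *ᵥ b) ⬝ᵥ N *ᵥ a = a ⬝ᵥ (N * B) *ᵥ b := by
    rw [dotProduct_comm, mulVec_dotProduct, hN, mulVec_mulVec]
  have hlin : a ⬝ᵥ N *ᵥ (B *ᵥ b) = a ⬝ᵥ (N * B) *ᵥ b := by
    rw [mulVec_mulVec]
  rw [mulVec_sub, dotProduct_sub, sub_dotProduct, sub_dotProduct, hcross, hlin,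
    quadForm_mulVec]
  ring

lemma gpdf_pos (hQ : Q.PosDef) (μ x : Fin k → ℝ) : 0 < gpdf μ Q x := by
  have := hQ.det_pos
  unfold gpdf
  positivity

lemma log_gpdf (hQ : Q.PosDef) (μ x : Fin k → ℝ) :
    log (gpdf μ Q x) = -log √((2 * π) ^ k * Q.det) - 1 / 2 * ((x - μ) ⬝ᵥ Q⁻¹ *ᵥ (x - μ)) := by
  have := hQ.det_pos
  rw [gpdf, log_mul (by positivity) (exp_ne_zero _), log_inv, log_exp]
  ring

end Basic

section GaussianReal
open ProbabilityTheory NNReal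
variable {μ : ℝ} {v : ℝ≥0}

lemma integrable_gaussianPDFReal_mul_pow (hv : v ≠ 0) (n : ℕ) :
    Integrable fun t => gaussianPDFReal μ v t * t ^ n := by
  have h : Integrable (fun t : ℝ => t ^ n) (gaussianReal μ v) := by
    refine (integrable_norm_iff (by fun_prop)).mp ?_
    simpa only [norm_pow, id] using
      (memLp_id_gaussianReal (μ := μ) (v := v) n).integrable_norm_pow'
  rw [gaussianReal_of_var_ne_zero _ hv, integrable_withDensity_iff_integrable_smul'
    (measurable_gaussianPDF _ _) (ae_of_all _ fun _ => gaussianPDF_lt_top)] at h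
  simpa [toReal_gaussianPDF] using h

lemma integral_gaussianPDFReal_mul_pow (hv : v ≠ 0) (n : ℕ) :
    ∫ t, gaussianPDFReal μ v t * t ^ n = ∫ t, t ^ n ∂gaussianReal μ v := by
  simp [integral_gaussianReal_eq_integral_smul hv]

lemma integral_gaussianPDFReal_mul_self (hv : v ≠ 0) :
    ∫ t, gaussianPDFReal μ v t * t = μ := by
  simpa using integral_gaussianPDFReal_mul_pow (μ := μ) hv 1

lemma integral_gaussianPDFReal_mul_sq (hv : v ≠ 0) :
    ∫ t, gaussianPDFReal μ v t * t ^ 2 = v + μ ^ 2 := by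
  have h := variance_eq_sub (memLp_id_gaussianReal (μ := μ) (v := v) 2)
  rw [variance_id_gaussianReal] at h
  rw [integral_gaussianPDFReal_mul_pow hv]
  simp only [Pi.pow_apply, id, integral_id_gaussianReal] at h
  linarith

end GaussianReal

section StandardGaussian
open ProbabilityTheory
variable {k : ℕ}

lemma gpdf_zero_one (u : Fin k → ℝ) : gpdf 0 1 u = ∏ i, gaussianPDFReal 0 1 (u i) := by
  have hsqrt : √((2 * π) ^ k) = ∏ _i : Fin k, √(2 * π) := by
    rw [← Real.sqrt_prod _ fun _ _ => by positivity, Finset.prod_const, Finset.card_fin]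
  simp only [gpdf, gaussianPDFReal, det_one, mul_one, inv_one, one_mulVec, sub_zero,
    NNReal.coe_one, Finset.prod_mul_distrib, hsqrt, Finset.prod_inv_distrib, ← Real.exp_sum,
    dotProduct, Finset.mul_sum]
  congr 2
  exact Finset.sum_congr rfl fun i _ => by ring

lemma gpdf_zero_one_mul_prod (f : Fin k → ℝ → ℝ) (u : Fin k → ℝ) :
    gpdf 0 1 u * ∏ i, f i (u i) = ∏ i, gaussianPDFReal 0 1 (u i) * f i (u i) := by
  rw [gpdf_zero_one, Finset.prod_mul_distrib]

lemma integrable_gpdf_zero_one_mul_prod_pow (e : Fin k → ℕ) :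
    Integrable fun u : Fin k → ℝ => gpdf 0 1 u * ∏ i, u i ^ e i := by
  simp only [gpdf_zero_one_mul_prod fun i t => t ^ e i]
  exact Integrable.fintype_prod fun i => integrable_gaussianPDFReal_mul_pow one_ne_zero (e i)

lemma integral_gpdf_zero_one_mul_prod_pow (e : Fin k → ℕ) :
    ∫ u : Fin k → ℝ, gpdf 0 1 u * ∏ i, u i ^ e i
      = ∏ i, ∫ t, gaussianPDFReal 0 1 t * t ^ e i := by
  simp only [gpdf_zero_one_mul_prod fun i t => t ^ e i]
  exact integral_fintype_prod_volume_eq_prod (fun i t => gaussianPDFReal 0 1 t * t ^ e i)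

lemma apply_eq_prod_pow (u : Fin k → ℝ) (i : Fin k) :
    u i = ∏ l, u l ^ (if l = i then 1 else 0) := by
  simp

lemma apply_mul_apply_eq_prod_pow (u : Fin k → ℝ) (i j : Fin k) :
    u i * u j = ∏ l, u l ^ ((if l = i then 1 else 0) + (if l = j then 1 else 0)) := by
  simp only [pow_add, Finset.prod_mul_distrib, ← apply_eq_prod_pow]

lemma integrable_gpdf_zero_one_mul_apply (i : Fin k) :
    Integrable fun u : Fin k → ℝ => gpdf 0 1 u * u i := by
  simpa only [← apply_eq_prod_pow] using integrable_gpdf_zero_one_mul_prod_pow fun l =>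
    if l = i then 1 else 0

lemma integral_gpdf_zero_one_mul_apply (i : Fin k) :
    ∫ u : Fin k → ℝ, gpdf 0 1 u * u i = 0 := by
  simp only [apply_eq_prod_pow _ i]
  rw [integral_gpdf_zero_one_mul_prod_pow]
  exact Finset.prod_eq_zero (Finset.mem_univ i)
    (by simpa using integral_gaussianPDFReal_mul_self (μ := 0) one_ne_zero)

lemma integrable_gpdf_zero_one_mul_apply_mul_apply (i j : Fin k) :
    Integrable fun u : Fin k → ℝ => gpdf 0 1 u * (u i * u j) := by
  simpa only [← apply_mul_apply_eq_prod_pow] using integrable_gpdf_zero_one_mul_prod_pow fun l =>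
    (if l = i then 1 else 0) + (if l = j then 1 else 0)

lemma integral_gpdf_zero_one_mul_apply_mul_apply (i j : Fin k) :
    ∫ u : Fin k → ℝ, gpdf 0 1 u * (u i * u j) = (1 : Matrix (Fin k) (Fin k) ℝ) i j := by
  simp only [apply_mul_apply_eq_prod_pow _ i j]
  rw [integral_gpdf_zero_one_mul_prod_pow]
  obtain rfl | hij := eq_or_ne i j
  · refine (Finset.prod_eq_one fun l _ => ?_).trans (one_apply_eq i).symm
    by_cases hl : l = i
    · simpa [hl] using integral_gaussianPDFReal_mul_sq (μ := 0) one_ne_zero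
    · simpa [hl] using integral_gaussianPDFReal_eq_one 0 one_ne_zero
  · refine (Finset.prod_eq_zero (Finset.mem_univ i) ?_).trans (one_apply_ne hij).symm
    simpa [hij] using integral_gaussianPDFReal_mul_self (μ := 0) one_ne_zero

lemma gpdf_zero_one_mul_quadratic (α : ℝ) (v : Fin k → ℝ) (N : Matrix (Fin k) (Fin k) ℝ)
    (u : Fin k → ℝ) :
    gpdf 0 1 u * (α + v ⬝ᵥ u + u ⬝ᵥ N *ᵥ u)
      = α * gpdf 0 1 u + ∑ i, v i * (gpdf 0 1 u * u i)
        + ∑ i, ∑ j, N i j * (gpdf 0 1 u * (u i * u j)) := by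
  simp only [dotProduct, mulVec, mul_add, Finset.mul_sum]
  congr 1
  · congr 1
    · ring
    · exact Finset.sum_congr rfl fun i _ => by ring
  · exact Finset.sum_congr rfl fun i _ => Finset.sum_congr rfl fun j _ => by ring

lemma integrable_gpdf_zero_one_mul_quadratic (α : ℝ) (v : Fin k → ℝ)
    (N : Matrix (Fin k) (Fin k) ℝ) :
    Integrable fun u : Fin k → ℝ => gpdf 0 1 u * (α + v ⬝ᵥ u + u ⬝ᵥ N *ᵥ u) := by
  simp only [gpdf_zero_one_mul_quadratic]
  refine .add (.add ?_ ?_) ?_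
  · simpa using (integrable_gpdf_zero_one_mul_prod_pow (k := k) 0).const_mul α
  · exact integrable_finsetSum _ fun i _ => (integrable_gpdf_zero_one_mul_apply i).const_mul _
  · exact integrable_finsetSum _ fun i _ => integrable_finsetSum _ fun j _ =>
      (integrable_gpdf_zero_one_mul_apply_mul_apply i j).const_mul _

lemma integral_gpdf_zero_one_mul_quadratic (α : ℝ) (v : Fin k → ℝ)
    (N : Matrix (Fin k) (Fin k) ℝ) :
    ∫ u : Fin k → ℝ, gpdf 0 1 u * (α + v ⬝ᵥ u + u ⬝ᵥ N *ᵥ u) = α + N.trace := by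
  have hpdf : Integrable fun u : Fin k → ℝ => gpdf 0 1 u := by
    simpa using integrable_gpdf_zero_one_mul_prod_pow (k := k) 0
  have hlin : ∀ i, Integrable fun u : Fin k → ℝ => v i * (gpdf 0 1 u * u i) := fun i =>
    (integrable_gpdf_zero_one_mul_apply i).const_mul _
  have hquad : ∀ i j, Integrable fun u : Fin k → ℝ => N i j * (gpdf 0 1 u * (u i * u j)) :=
    fun i j => (integrable_gpdf_zero_one_mul_apply_mul_apply i j).const_mul _
  have hone : ∫ u : Fin k → ℝ, gpdf 0 1 u = 1 := by
    simpa [ProbabilityTheory.integral_gaussianPDFReal_eq_one] using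
      integral_gpdf_zero_one_mul_prod_pow (k := k) 0
  have hlin' : Integrable fun u : Fin k → ℝ => ∑ i, v i * (gpdf 0 1 u * u i) :=
    integrable_finsetSum _ fun i _ => hlin i
  have hquad' : Integrable fun u : Fin k → ℝ => ∑ i, ∑ j, N i j * (gpdf 0 1 u * (u i * u j)) :=
    integrable_finsetSum _ fun i _ => integrable_finsetSum _ fun j _ => hquad i j
  have hconst : Integrable fun u : Fin k → ℝ => α * gpdf 0 1 u := hpdf.const_mul α
  have hconst_lin : Integrable fun u : Fin k → ℝ =>
      α * gpdf 0 1 u + ∑ i, v i * (gpdf 0 1 u * u i) := hconst.add hlin'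
  simp only [gpdf_zero_one_mul_quadratic]
  rw [integral_add hconst_lin hquad', integral_add hconst hlin',
    integral_finsetSum _ fun i _ => hlin i,
    integral_finsetSum _ fun i _ => integrable_finsetSum _ fun j _ => hquad i j]
  simp only [integral_finsetSum _ fun j _ => hquad _ j, integral_const_mul, hone,
    integral_gpdf_zero_one_mul_apply, integral_gpdf_zero_one_mul_apply_mul_apply, mul_zero,
    Finset.sum_const_zero, add_zero, mul_one, trace, diag]
  simp [one_apply]

end StandardGaussian

section ChangeOfVariables
variable {k : ℕ} {M : Matrix (Fin k) (Fin k) ℝ}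

lemma measurableEmbedding_toLin' (hM : M.det ≠ 0) : MeasurableEmbedding (toLin' M) := by
  let e := (toLin' M).equivOfDetNeZero (by rwa [LinearMap.det_toLin'])
  exact e.toContinuousLinearEquiv.toHomeomorph.measurableEmbedding

lemma integral_comp_mulVec_add (hM : M.det ≠ 0) (c : Fin k → ℝ) (f : (Fin k → ℝ) → ℝ) :
    ∫ u, f (M *ᵥ u + c) = |M.det|⁻¹ * ∫ x, f x := by
  have h := (measurableEmbedding_toLin' hM).integral_map (μ := volume) fun x => f (x + c)
  rw [Real.map_matrix_volume_pi_eq_smul_volume_pi hM, integral_smul_measure,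
    integral_add_right_eq_self, ENNReal.toReal_ofReal (abs_nonneg _), abs_inv] at h
  simpa [toLin'_apply] using h.symm

lemma integrable_comp_mulVec_add_iff (hM : M.det ≠ 0) (c : Fin k → ℝ)
    (f : (Fin k → ℝ) → ℝ) :
    Integrable (fun u => f (M *ᵥ u + c)) ↔ Integrable f := by
  have h := (measurableEmbedding_toLin' hM).integrable_map_iff (μ := volume)
    (g := fun x => f (x + c))
  rw [Real.map_matrix_volume_pi_eq_smul_volume_pi hM, integrable_smul_measure
    (by simpa [abs_pos] using hM) ENNReal.ofReal_ne_top,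
    ← Function.comp_def f, (measurePreserving_add_right volume c).integrable_comp_emb
      (MeasurableEquiv.addRight c).measurableEmbedding] at h
  simpa [Function.comp_def, toLin'_apply] using h.symm

end ChangeOfVariables

section Standardization
variable {k : ℕ} {Q L : Matrix (Fin k) (Fin k) ℝ}

lemma exists_mul_transpose_eq (hQ : Q.PosDef) : ∃ L : Matrix (Fin k) (Fin k) ℝ, L * Lᵀ = Q := by
  open scoped MatrixOrder in
  refine ⟨CFC.sqrt Q, ?_⟩
  rw [show (CFC.sqrt Q)ᵀ = CFC.sqrt Q by simpa using (CFC.sqrt_nonneg Q).posSemidef.1.eq]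
  exact CFC.sqrt_mul_sqrt_self Q hQ.posSemidef.nonneg

lemma det_sq_of_mul_transpose_eq (hL : L * Lᵀ = Q) : L.det ^ 2 = Q.det := by
  rw [← hL, det_mul, det_transpose, sq]

lemma det_ne_zero_of_mul_transpose_eq (hQ : Q.PosDef) (hL : L * Lᵀ = Q) : L.det ≠ 0 :=
  fun h => hQ.det_pos.ne' (by rw [← det_sq_of_mul_transpose_eq hL, h, zero_pow two_ne_zero])

lemma gpdf_mulVec_add (hQ : Q.PosDef) (hL : L * Lᵀ = Q) (μ u : Fin k → ℝ) :
    gpdf μ Q (L *ᵥ u + μ) = |L.det|⁻¹ * gpdf 0 1 u := by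
  have hdet : IsUnit L.det := (det_ne_zero_of_mul_transpose_eq hQ hL).isUnit
  have hquad : (L *ᵥ u) ⬝ᵥ Q⁻¹ *ᵥ (L *ᵥ u) = u ⬝ᵥ u := by
    rw [← hL, Matrix.mul_inv_rev, mulVec_dotProduct, mulVec_mulVec, mulVec_mulVec,
      ← Matrix.mul_assoc, ← transpose_nonsing_inv, ← transpose_mul, nonsing_inv_mul _ hdet,
      transpose_one, Matrix.one_mul, nonsing_inv_mul _ hdet, one_mulVec]
  have hnorm : √((2 * π) ^ k * Q.det) = √((2 * π) ^ k) * |L.det| := by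
    rw [Real.sqrt_mul (by positivity), ← det_sq_of_mul_transpose_eq hL, Real.sqrt_sq_eq_abs]
  simp only [gpdf, add_sub_cancel_right, hquad, hnorm, det_one, mul_one, inv_one,
    one_mulVec, sub_zero, mul_inv]
  ring

lemma integral_gpdf_mul (hQ : Q.PosDef) (hL : L * Lᵀ = Q) (μ : Fin k → ℝ)
    (f : (Fin k → ℝ) → ℝ) :
    ∫ x, gpdf μ Q x * f x = ∫ u, gpdf 0 1 u * f (L *ᵥ u + μ) := by
  have hdet := det_ne_zero_of_mul_transpose_eq hQ hL
  have h := integral_comp_mulVec_add hdet μ fun x => gpdf μ Q x * f x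
  simp only [gpdf_mulVec_add hQ hL, mul_assoc, integral_const_mul] at h
  exact (mul_left_cancel₀ (inv_ne_zero (abs_ne_zero.mpr hdet)) h).symm

lemma integrable_gpdf_mul_iff (hQ : Q.PosDef) (hL : L * Lᵀ = Q) (μ : Fin k → ℝ)
    (f : (Fin k → ℝ) → ℝ) :
    Integrable (fun x => gpdf μ Q x * f x) ↔
      Integrable (fun u => gpdf 0 1 u * f (L *ᵥ u + μ)) := by
  have hdet := det_ne_zero_of_mul_transpose_eq hQ hL
  rw [← integrable_comp_mulVec_add_iff hdet μ]
  simp only [gpdf_mulVec_add hQ hL, mul_assoc]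
  exact integrable_const_mul_iff (isUnit_iff_ne_zero.mpr (inv_ne_zero (abs_ne_zero.mpr hdet))) _

end Standardization

section GaussianQuadratic
variable {k : ℕ} {Q : Matrix (Fin k) (Fin k) ℝ}

lemma quadratic_mulVec_add_sub (L : Matrix (Fin k) (Fin k) ℝ) (μ u : Fin k → ℝ) (α : ℝ)
    (v : Fin k → ℝ) (N : Matrix (Fin k) (Fin k) ℝ) :
    α + v ⬝ᵥ (L *ᵥ u + μ - μ) + (L *ᵥ u + μ - μ) ⬝ᵥ N *ᵥ (L *ᵥ u + μ - μ)
      = α + (Lᵀ *ᵥ v) ⬝ᵥ u + u ⬝ᵥ (Lᵀ * N * L) *ᵥ u := by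
  have hlin : v ⬝ᵥ L *ᵥ u = (Lᵀ *ᵥ v) ⬝ᵥ u := by
    rw [mulVec_dotProduct, transpose_transpose]
  rw [add_sub_cancel_right, hlin, quadForm_mulVec]

lemma integrable_gpdf_mul_quadratic (hQ : Q.PosDef) (μ : Fin k → ℝ) (α : ℝ) (v : Fin k → ℝ)
    (N : Matrix (Fin k) (Fin k) ℝ) :
    Integrable fun x => gpdf μ Q x * (α + v ⬝ᵥ (x - μ) + (x - μ) ⬝ᵥ N *ᵥ (x - μ)) := by
  obtain ⟨L, hL⟩ := exists_mul_transpose_eq hQ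
  rw [integrable_gpdf_mul_iff hQ hL μ]
  simp only [quadratic_mulVec_add_sub]
  exact integrable_gpdf_zero_one_mul_quadratic _ _ _

lemma integral_gpdf_mul_quadratic (hQ : Q.PosDef) (μ : Fin k → ℝ) (α : ℝ) (v : Fin k → ℝ)
    (N : Matrix (Fin k) (Fin k) ℝ) :
    ∫ x, gpdf μ Q x * (α + v ⬝ᵥ (x - μ) + (x - μ) ⬝ᵥ N *ᵥ (x - μ)) = α + (N * Q).trace := by
  obtain ⟨L, hL⟩ := exists_mul_transpose_eq hQ
  rw [integral_gpdf_mul hQ hL μ]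
  simp only [quadratic_mulVec_add_sub]
  rw [integral_gpdf_zero_one_mul_quadratic, trace_mul_cycle, hL, trace_mul_comm]

lemma integrable_gpdf (hQ : Q.PosDef) (μ : Fin k → ℝ) : Integrable (gpdf μ Q) := by
  simpa using integrable_gpdf_mul_quadratic hQ μ 1 0 0

lemma integral_gpdf (hQ : Q.PosDef) (μ : Fin k → ℝ) : ∫ x, gpdf μ Q x = 1 := by
  simpa using integral_gpdf_mul_quadratic hQ μ 1 0 0

lemma integrable_gpdf_mul_quadForm_affine {l : ℕ} (hQ : Q.PosDef) (μ : Fin k → ℝ) (c : ℝ)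
    {N : Matrix (Fin l) (Fin l) ℝ} (hN : Nᵀ = N) (D : Matrix (Fin l) (Fin k) ℝ) (e : Fin l → ℝ) :
    Integrable fun x => gpdf μ Q x * (c + (D *ᵥ (x - μ) + e) ⬝ᵥ N *ᵥ (D *ᵥ (x - μ) + e)) := by
  refine (integrable_gpdf_mul_quadratic hQ μ (c + e ⬝ᵥ N *ᵥ e) ((2 : ℝ) • Dᵀ *ᵥ N *ᵥ e)
    (Dᵀ * N * D)).congr (ae_of_all _ fun x => ?_)
  dsimp only
  rw [quadForm_add hN, quadForm_mulVec, dotProduct_comm (N *ᵥ e), mulVec_dotProduct,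
    dotProduct_comm _ (Dᵀ *ᵥ _), smul_dotProduct, smul_eq_mul]
  ring

lemma integrable_gpdf_mul_log_gpdf (hQ : Q.PosDef) (μ : Fin k → ℝ) :
    Integrable fun x => gpdf μ Q x * log (gpdf μ Q x) := by
  refine (integrable_gpdf_mul_quadratic hQ μ (-log √((2 * π) ^ k * Q.det)) 0
    (-(1 / 2 : ℝ) • Q⁻¹)).congr (ae_of_all _ fun x => ?_)
  dsimp only
  rw [log_gpdf hQ, zero_dotProduct, smul_mulVec, dotProduct_smul, smul_eq_mul]
  ring

end GaussianQuadratic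

section KL
variable {k : ℕ} {Q₁ Q₂ : Matrix (Fin k) (Fin k) ℝ}

noncomputable def gaussianKL (μ₁ : Fin k → ℝ) (Q₁ : Matrix (Fin k) (Fin k) ℝ) (μ₂ : Fin k → ℝ)
    (Q₂ : Matrix (Fin k) (Fin k) ℝ) : ℝ :=
  ∫ x, gpdf μ₁ Q₁ x * log (gpdf μ₁ Q₁ x / gpdf μ₂ Q₂ x)

lemma log_gpdf_div_gpdf (h₁ : Q₁.PosDef) (h₂ : Q₂.PosDef) (μ₁ μ₂ x : Fin k → ℝ) :
    log (gpdf μ₁ Q₁ x / gpdf μ₂ Q₂ x)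
      = (log √((2 * π) ^ k * Q₂.det) - log √((2 * π) ^ k * Q₁.det)
          + 1 / 2 * ((μ₁ - μ₂) ⬝ᵥ Q₂⁻¹ *ᵥ (μ₁ - μ₂)))
        + (Q₂⁻¹ *ᵥ (μ₁ - μ₂)) ⬝ᵥ (x - μ₁)
        + (x - μ₁) ⬝ᵥ ((1 / 2 : ℝ) • (Q₂⁻¹ - Q₁⁻¹)) *ᵥ (x - μ₁) := by
  rw [log_div (gpdf_pos h₁ μ₁ x).ne' (gpdf_pos h₂ μ₂ x).ne', log_gpdf h₁, log_gpdf h₂,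
    show x - μ₂ = (x - μ₁) + (μ₁ - μ₂) by abel, quadForm_add (transpose_eq_of_posDef h₂.inv)]
  simp only [smul_mulVec, sub_mulVec, dotProduct_smul, dotProduct_sub, smul_eq_mul]
  ring

lemma integrable_gpdf_mul_log_div (h₁ : Q₁.PosDef) (h₂ : Q₂.PosDef) (μ₁ μ₂ : Fin k → ℝ) :
    Integrable fun x => gpdf μ₁ Q₁ x * log (gpdf μ₁ Q₁ x / gpdf μ₂ Q₂ x) := by
  simpa only [log_gpdf_div_gpdf h₁ h₂] using integrable_gpdf_mul_quadratic h₁ μ₁ _ _ _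

lemma gaussianKL_eq (h₁ : Q₁.PosDef) (h₂ : Q₂.PosDef) (μ₁ μ₂ : Fin k → ℝ) :
    gaussianKL μ₁ Q₁ μ₂ Q₂
      = 1 / 2 * ((Q₂⁻¹ * Q₁).trace - k + (μ₁ - μ₂) ⬝ᵥ Q₂⁻¹ *ᵥ (μ₁ - μ₂)
          + log (Q₂.det / Q₁.det)) := by
  have := h₁.det_pos
  have := h₂.det_pos
  simp only [gaussianKL, log_gpdf_div_gpdf h₁ h₂, integral_gpdf_mul_quadratic h₁,
    smul_mul_assoc, trace_smul, Matrix.sub_mul, trace_sub,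
    nonsing_inv_mul _ h₁.det_pos.ne'.isUnit, trace_one, Fintype.card_fin, smul_eq_mul]
  rw [log_sqrt (by positivity), log_sqrt (by positivity), log_mul (by positivity) this.ne',
    log_mul (by positivity) (by positivity : Q₁.det ≠ 0), log_div this.ne' (by positivity)]
  ring

lemma gaussianKL_nonneg (h₁ : Q₁.PosDef) (h₂ : Q₂.PosDef) (μ₁ μ₂ : Fin k → ℝ) :
    0 ≤ gaussianKL μ₁ Q₁ μ₂ Q₂ := by
  have hle : ∀ x, gpdf μ₁ Q₁ x - gpdf μ₂ Q₂ x
      ≤ gpdf μ₁ Q₁ x * log (gpdf μ₁ Q₁ x / gpdf μ₂ Q₂ x) := fun x => by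
    have hq := gpdf_pos h₁ μ₁ x
    have hp := gpdf_pos h₂ μ₂ x
    have h := mul_le_mul_of_nonneg_left (self_sub_one_le_mul_log (div_pos hq hp).le) hp.le
    rwa [mul_sub, mul_div_cancel₀ _ hp.ne', mul_one, ← mul_assoc,
      mul_div_cancel₀ _ hp.ne'] at h
  have h := integral_mono ((integrable_gpdf h₁ μ₁).sub (integrable_gpdf h₂ μ₂))
    (integrable_gpdf_mul_log_div h₁ h₂ μ₁ μ₂) hle
  simp only [Pi.sub_apply] at h
  rwa [integral_sub (integrable_gpdf h₁ μ₁) (integrable_gpdf h₂ μ₂), integral_gpdf h₁,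
    integral_gpdf h₂, sub_self] at h

lemma gaussianKL_self (μ : Fin k → ℝ) (Q : Matrix (Fin k) (Fin k) ℝ) :
    gaussianKL μ Q μ Q = 0 := by
  simp [gaussianKL]

end KL

noncomputable def posteriorCov {m n : ℕ} (SigΘ : Matrix (Fin m) (Fin m) ℝ)
    (A : Matrix (Fin n) (Fin m) ℝ) (S : Matrix (Fin n) (Fin n) ℝ) : Matrix (Fin m) (Fin m) ℝ :=
  (Aᵀ * S⁻¹ * A + SigΘ⁻¹)⁻¹

noncomputable def posteriorMean {m n : ℕ} (μΘ : Fin m → ℝ) (SigΘ : Matrix (Fin m) (Fin m) ℝ)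
    (A : Matrix (Fin n) (Fin m) ℝ) (S : Matrix (Fin n) (Fin n) ℝ) (y : Fin n → ℝ) : Fin m → ℝ :=
  (posteriorCov SigΘ A S * Aᵀ * S⁻¹) *ᵥ y + posteriorCov SigΘ A S *ᵥ (SigΘ⁻¹ *ᵥ μΘ)

section LinearGaussian
variable {m n : ℕ} {SigΘ : Matrix (Fin m) (Fin m) ℝ} {A : Matrix (Fin n) (Fin m) ℝ}
  {S : Matrix (Fin n) (Fin n) ℝ}

lemma posDef_transpose_mul_inv_mul_add_inv (hSigΘ : SigΘ.PosDef) (hS : S.PosDef) :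
    (Aᵀ * S⁻¹ * A + SigΘ⁻¹).PosDef := by
  refine .posSemidef_add ?_ hSigΘ.inv
  simpa using hS.inv.posSemidef.conjTranspose_mul_mul_same A

lemma posDef_posteriorCov (hSigΘ : SigΘ.PosDef) (hS : S.PosDef) :
    (posteriorCov SigΘ A S).PosDef :=
  (posDef_transpose_mul_inv_mul_add_inv hSigΘ hS).inv

lemma posDef_mul_mul_transpose_add (hSigΘ : SigΘ.PosDef) (hS : S.PosDef) :
    (A * SigΘ * Aᵀ + S).PosDef := by
  refine .posSemidef_add ?_ hS
  simpa using hSigΘ.posSemidef.conjTranspose_mul_mul_same Aᵀ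

lemma inv_mul_mul_transpose_add (hSigΘ : SigΘ.PosDef) (hS : S.PosDef) :
    (A * SigΘ * Aᵀ + S)⁻¹
      = S⁻¹ - S⁻¹ * A * (Aᵀ * S⁻¹ * A + SigΘ⁻¹)⁻¹ * Aᵀ * S⁻¹ := by
  have hP := (posDef_transpose_mul_inv_mul_add_inv (A := A) hSigΘ hS).isUnit
  rw [add_comm, add_mul_mul_inv_eq_sub _ _ _ _ hS.isUnit hSigΘ.isUnit (by rwa [add_comm]),
    add_comm SigΘ⁻¹]

lemma det_mul_mul_transpose_add (hSigΘ : SigΘ.PosDef) (hS : S.PosDef) :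
    (A * SigΘ * Aᵀ + S).det = (Aᵀ * S⁻¹ * A + SigΘ⁻¹).det * SigΘ.det * S.det := by
  have hfac : 1 + Aᵀ * S⁻¹ * (A * SigΘ) = (Aᵀ * S⁻¹ * A + SigΘ⁻¹) * SigΘ := by
    rw [Matrix.add_mul, nonsing_inv_mul _ hSigΘ.det_pos.ne'.isUnit, Matrix.mul_assoc _ A,
      add_comm]
  rw [add_comm, det_add_mul _ _ hS.det_pos.ne'.isUnit, hfac, det_mul]
  ring

/-- Completing the square in `z`; the remainder is identified by the Woodbury identity. -/
lemma quadForm_prior_add_likelihood (hSigΘ : SigΘ.PosDef) (hS : S.PosDef) (z : Fin m → ℝ)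
    (w : Fin n → ℝ) :
    z ⬝ᵥ SigΘ⁻¹ *ᵥ z + (w - A *ᵥ z) ⬝ᵥ S⁻¹ *ᵥ (w - A *ᵥ z)
      = (z - ((Aᵀ * S⁻¹ * A + SigΘ⁻¹)⁻¹ * Aᵀ * S⁻¹) *ᵥ w) ⬝ᵥ (Aᵀ * S⁻¹ * A + SigΘ⁻¹) *ᵥ
          (z - ((Aᵀ * S⁻¹ * A + SigΘ⁻¹)⁻¹ * Aᵀ * S⁻¹) *ᵥ w)
        + w ⬝ᵥ (A * SigΘ * Aᵀ + S)⁻¹ *ᵥ w := by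
  have hP := posDef_transpose_mul_inv_mul_add_inv (A := A) hSigΘ hS
  rw [inv_mul_mul_transpose_add hSigΘ hS]
  set P := Aᵀ * S⁻¹ * A + SigΘ⁻¹ with hPdef
  have hSinvT : (S⁻¹)ᵀ = S⁻¹ := transpose_eq_of_posDef hS.inv
  have hPinvT : (P⁻¹)ᵀ = P⁻¹ := transpose_eq_of_posDef hP.inv
  have hPK : P * (P⁻¹ * Aᵀ * S⁻¹) = Aᵀ * S⁻¹ := by
    rw [Matrix.mul_assoc P⁻¹, mul_nonsing_inv_cancel_left _ _ hP.det_pos.ne'.isUnit]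
  have hKPK : (P⁻¹ * Aᵀ * S⁻¹)ᵀ * P * (P⁻¹ * Aᵀ * S⁻¹) = S⁻¹ * A * P⁻¹ * Aᵀ * S⁻¹ := by
    rw [Matrix.mul_assoc _ P, hPK, transpose_mul, transpose_mul, hSinvT, hPinvT,
      transpose_transpose]
    simp only [Matrix.mul_assoc]
  have hcross : w ⬝ᵥ (S⁻¹ * A) *ᵥ z = z ⬝ᵥ (Aᵀ * S⁻¹) *ᵥ w := by
    rw [← dotProduct_transpose_mulVec, transpose_mul, hSinvT]
  have hPT : Pᵀ = P := transpose_eq_of_posDef hP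
  rw [quadForm_sub_mulVec hSinvT, quadForm_sub_mulVec hPT, hPK, hKPK, hcross, sub_mulVec,
    dotProduct_sub, hPdef, add_mulVec, dotProduct_add]
  ring

lemma gpdf_mul_gpdf_eq (hSigΘ : SigΘ.PosDef) (hS : S.PosDef) (μΘ θ : Fin m → ℝ)
    (y : Fin n → ℝ) :
    gpdf μΘ SigΘ θ * gpdf (A *ᵥ θ) S y
      = gpdf (posteriorMean μΘ SigΘ A S y) (posteriorCov SigΘ A S) θ
        * gpdf (A *ᵥ μΘ) (A * SigΘ * Aᵀ + S) y := by
  unfold posteriorMean posteriorCov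
  have hP := posDef_transpose_mul_inv_mul_add_inv (A := A) hSigΘ hS
  have hdet := det_mul_mul_transpose_add (A := A) hSigΘ hS
  set P := Aᵀ * S⁻¹ * A + SigΘ⁻¹ with hPdef
  have hPunit : IsUnit P.det := hP.det_pos.ne'.isUnit
  have hmean : θ - ((P⁻¹ * Aᵀ * S⁻¹) *ᵥ y + P⁻¹ *ᵥ (SigΘ⁻¹ *ᵥ μΘ))
      = (θ - μΘ) - (P⁻¹ * Aᵀ * S⁻¹) *ᵥ (y - A *ᵥ μΘ) := by
    have hμ : P⁻¹ *ᵥ (SigΘ⁻¹ *ᵥ μΘ) = μΘ - (P⁻¹ * Aᵀ * S⁻¹) *ᵥ (A *ᵥ μΘ) := by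
      refine eq_sub_of_add_eq' ?_
      rw [mulVec_mulVec, mulVec_mulVec, ← add_mulVec, Matrix.mul_assoc _ S⁻¹,
        Matrix.mul_assoc P⁻¹, ← Matrix.mul_add, ← Matrix.mul_assoc Aᵀ, ← hPdef,
        nonsing_inv_mul _ hPunit, one_mulVec]
    rw [hμ, mulVec_sub]
    abel
  have hresid : y - A *ᵥ θ = (y - A *ᵥ μΘ) - A *ᵥ (θ - μΘ) := by
    rw [mulVec_sub]
    abel
  have hnorm : (2 * π) ^ m * SigΘ.det * ((2 * π) ^ n * S.det)
      = (2 * π) ^ m * P⁻¹.det * ((2 * π) ^ n * (A * SigΘ * Aᵀ + S).det) := by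
    rw [hdet, det_nonsing_inv, Ring.inverse_eq_inv']
    field_simp [hP.det_pos.ne']
  have := hSigΘ.det_pos
  have := hS.det_pos
  have := hP.inv.det_pos
  have := (posDef_mul_mul_transpose_add (A := A) hSigΘ hS).det_pos
  simp only [gpdf]
  rw [mul_mul_mul_comm, ← exp_add, mul_mul_mul_comm _ (exp _), ← exp_add, ← mul_inv, ← mul_inv,
    ← sqrt_mul (by positivity), ← sqrt_mul (by positivity), hnorm, hmean, hresid,
    nonsing_inv_nonsing_inv _ hPunit]
  congr 2
  linear_combination (-1 / 2 : ℝ) * quadForm_prior_add_likelihood hSigΘ hS (θ - μΘ) (y - A *ᵥ μΘ)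

end LinearGaussian

section Elbo
variable {m n : ℕ} {μΘ : Fin m → ℝ} {SigΘ : Matrix (Fin m) (Fin m) ℝ}
  {A : Matrix (Fin n) (Fin m) ℝ} {S : Matrix (Fin n) (Fin n) ℝ} {Q : Matrix (Fin m) (Fin m) ℝ}

lemma integral_elbo_integrand_eq (hSigΘ : SigΘ.PosDef) (hS : S.PosDef) (hQ : Q.PosDef)
    (R : Matrix (Fin m) (Fin n) ℝ) (b : Fin m → ℝ) (y : Fin n → ℝ) :
    ∫ θ, gpdf (R *ᵥ y + b) Q θ *
        (log (gpdf (R *ᵥ y + b) Q θ / gpdf μΘ SigΘ θ) - log (gpdf (A *ᵥ θ) S y))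
      = gaussianKL (R *ᵥ y + b) Q (posteriorMean μΘ SigΘ A S y) (posteriorCov SigΘ A S)
        - log (gpdf (A *ᵥ μΘ) (A * SigΘ * Aᵀ + S) y) := by
  have hP := posDef_posteriorCov (A := A) hSigΘ hS
  have hM := posDef_mul_mul_transpose_add (A := A) hSigΘ hS
  have hpoint : ∀ θ, log (gpdf (R *ᵥ y + b) Q θ / gpdf μΘ SigΘ θ) - log (gpdf (A *ᵥ θ) S y)
      = log (gpdf (R *ᵥ y + b) Q θ / gpdf (posteriorMean μΘ SigΘ A S y) (posteriorCov SigΘ A S) θ)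
        - log (gpdf (A *ᵥ μΘ) (A * SigΘ * Aᵀ + S) y) := fun θ => by
    have hbayes := congrArg log (gpdf_mul_gpdf_eq (A := A) hSigΘ hS μΘ θ y)
    rw [log_mul (gpdf_pos hSigΘ _ _).ne' (gpdf_pos hS _ _).ne',
      log_mul (gpdf_pos hP _ _).ne' (gpdf_pos hM _ _).ne'] at hbayes
    rw [log_div (gpdf_pos hQ _ _).ne' (gpdf_pos hSigΘ _ _).ne',
      log_div (gpdf_pos hQ _ _).ne' (gpdf_pos hP _ _).ne']
    linarith
  simp only [hpoint, mul_sub]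
  rw [integral_sub (integrable_gpdf_mul_log_div hQ hP _ _) ((integrable_gpdf hQ _).mul_const _),
    integral_mul_const, integral_gpdf hQ, one_mul, gaussianKL]

lemma integrable_marginal_mul_gaussianKL (hSigΘ : SigΘ.PosDef) (hS : S.PosDef) (hQ : Q.PosDef)
    (R : Matrix (Fin m) (Fin n) ℝ) (b : Fin m → ℝ) :
    Integrable fun y => gpdf (A *ᵥ μΘ) (A * SigΘ * Aᵀ + S) y *
      gaussianKL (R *ᵥ y + b) Q (posteriorMean μΘ SigΘ A S y) (posteriorCov SigΘ A S) := by
  have hP := posDef_posteriorCov (A := A) hSigΘ hS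
  have hM := posDef_mul_mul_transpose_add (A := A) hSigΘ hS
  set D := R - posteriorCov SigΘ A S * Aᵀ * S⁻¹
  set e := D *ᵥ (A *ᵥ μΘ) + (b - posteriorCov SigΘ A S *ᵥ (SigΘ⁻¹ *ᵥ μΘ))
  have hmean : ∀ y, R *ᵥ y + b - posteriorMean μΘ SigΘ A S y = D *ᵥ (y - A *ᵥ μΘ) + e :=
    fun y => by
      simp only [posteriorMean, D, e, sub_mulVec, mulVec_sub]
      abel
  refine ((integrable_gpdf_mul_quadForm_affine hM (A *ᵥ μΘ)
    (((posteriorCov SigΘ A S)⁻¹ * Q).trace - m + log ((posteriorCov SigΘ A S).det / Q.det))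
    (transpose_eq_of_posDef hP.inv) D e).const_mul (1 / 2)).congr (ae_of_all _ fun y => ?_)
  dsimp only
  rw [gaussianKL_eq hQ hP, hmean]
  ring

lemma elboLoss_eq (hSigΘ : SigΘ.PosDef) (hS : S.PosDef) (hQ : Q.PosDef)
    (R : Matrix (Fin m) (Fin n) ℝ) (b : Fin m → ℝ) :
    elboLoss μΘ SigΘ A S R b Q
      = (∫ y, gpdf (A *ᵥ μΘ) (A * SigΘ * Aᵀ + S) y *
          gaussianKL (R *ᵥ y + b) Q (posteriorMean μΘ SigΘ A S y) (posteriorCov SigΘ A S))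
        - ∫ y, gpdf (A *ᵥ μΘ) (A * SigΘ * Aᵀ + S) y *
            log (gpdf (A *ᵥ μΘ) (A * SigΘ * Aᵀ + S) y) := by
  have hM := posDef_mul_mul_transpose_add (A := A) hSigΘ hS
  simp only [elboLoss, integral_elbo_integrand_eq hSigΘ hS hQ]
  simp only [mul_sub]
  exact integral_sub (integrable_marginal_mul_gaussianKL hSigΘ hS hQ R b)
    (integrable_gpdf_mul_log_gpdf hM _)

end Elbo

/-- The minimizer of the ELBO loss over Gaussian encoders `(R_φ, b_φ, Q_φ)` with `Q_φ`
positive definite is the exact Bayes posterior `Q_φ = (AᵀS⁻¹A + Σ_Θ⁻¹)⁻¹`,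
`R_φ = Q_φ Aᵀ S⁻¹`, `b_φ = Q_φ Σ_Θ⁻¹ μ_Θ`. -/
theorem stmt10 {m n : ℕ} (μΘ : Fin m → ℝ) (SigΘ : Matrix (Fin m) (Fin m) ℝ)
    (A : Matrix (Fin n) (Fin m) ℝ) (S : Matrix (Fin n) (Fin n) ℝ)
    (hSigΘ : SigΘ.PosDef) (hS : S.PosDef)
    (Qφ : Matrix (Fin m) (Fin m) ℝ) (hQφ : Qφ = (Aᵀ * S⁻¹ * A + SigΘ⁻¹)⁻¹)
    (Rφ : Matrix (Fin m) (Fin n) ℝ) (hRφ : Rφ = Qφ * Aᵀ * S⁻¹)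
    (bφ : Fin m → ℝ) (hbφ : bφ = Qφ *ᵥ (SigΘ⁻¹ *ᵥ μΘ)) :
    ∀ (R : Matrix (Fin m) (Fin n) ℝ) (b : Fin m → ℝ) (Q : Matrix (Fin m) (Fin m) ℝ),
      Q.PosDef →
      elboLoss μΘ SigΘ A S Rφ bφ Qφ ≤ elboLoss μΘ SigΘ A S R b Q := by
  intro R b Q hQ
  obtain rfl : Qφ = posteriorCov SigΘ A S := hQφ
  subst hRφ hbφ
  have hP := posDef_posteriorCov (A := A) hSigΘ hS
  have hM := posDef_mul_mul_transpose_add (A := A) hSigΘ hS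
  rw [elboLoss_eq hSigΘ hS hP, elboLoss_eq hSigΘ hS hQ]
  simp only [posteriorMean, gaussianKL_self, mul_zero, integral_zero]
  gcongr
  exact integral_nonneg fun y => mul_nonneg (gpdf_pos hM _ _).le (gaussianKL_nonneg hQ hP _ _)
end

section
/- Let Y ~ N(μ_Y, Σ_Y) and p(y|θ) = N(Aθ, S) with A of full row rank, and β > 0 such that (S/β) − (1/β²) S Σ_Y⁻¹ S is positive semi-definite. Then Q_φ = (1/β)A⁺(S − (1/β)SΣ_Y⁻¹S)A⁺ᵀ, R_φ = A⁺(I − (1/β)SΣ_Y⁻¹), b_φ = (1/β)A⁺SΣ_Y⁻¹μ_Y satisfy the stationarity conditions of the β-VES problem: A Q_φ Aᵀ = S/β − (1/β²)SΣ_Y⁻¹S, R_φ = β Q_φ Aᵀ S⁻¹, and A(R_φ μ_Y + b_φ) = μ_Y. -/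
open Matrix

lemma aux_isUnit_AAT {m n : ℕ} (A : Matrix (Fin n) (Fin m) ℝ) (hA : A.rank = n) :
    IsUnit (A * Aᵀ) := by
  rw [← Matrix.mulVec_surjective_iff_isUnit]
  have hrank : (A * Aᵀ).rank = n := by
    rw [Matrix.rank_self_mul_transpose, hA]
  rw [Matrix.rank] at hrank
  have htop : LinearMap.range (A * Aᵀ).mulVecLin = ⊤ := by
    apply Submodule.eq_top_of_finrank_eq
    rw [hrank]
    simp [Module.finrank_pi]
  intro v
  have hv : v ∈ LinearMap.range (A * Aᵀ).mulVecLin := htop ▸ Submodule.mem_top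
  exact hv

/-- With `A` of full row rank, `A⁺ = Aᵀ(AAᵀ)⁻¹`, and `β > 0`, the explicit encoder
`Q_φ = (1/β)A⁺(S − (1/β)SΣ_Y⁻¹S)A⁺ᵀ`, `R_φ = A⁺(I − (1/β)SΣ_Y⁻¹)`,
`b_φ = (1/β)A⁺SΣ_Y⁻¹μ_Y` satisfies the β-VES stationarity conditions. -/
theorem stmt13 {m n : ℕ} (A : Matrix (Fin n) (Fin m) ℝ) (hA : A.rank = n)
    (S SigY : Matrix (Fin n) (Fin n) ℝ) (hS : S.PosDef) (hSigY : SigY.PosDef)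
    (μY : Fin n → ℝ) (β : ℝ) (hβ : 0 < β)
    (hpsd : (β⁻¹ • S - (β⁻¹ * β⁻¹) • (S * SigY⁻¹ * S)).PosSemidef)
    (Ap : Matrix (Fin m) (Fin n) ℝ) (hAp : Ap = Aᵀ * (A * Aᵀ)⁻¹)
    (Qφ : Matrix (Fin m) (Fin m) ℝ)
    (hQφ : Qφ = β⁻¹ • (Ap * (S - β⁻¹ • (S * SigY⁻¹ * S)) * Apᵀ))
    (Rφ : Matrix (Fin m) (Fin n) ℝ) (hRφ : Rφ = Ap * (1 - β⁻¹ • (S * SigY⁻¹)))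
    (bφ : Fin m → ℝ) (hbφ : bφ = β⁻¹ • (Ap *ᵥ (S *ᵥ (SigY⁻¹ *ᵥ μY)))) :
    A * Qφ * Aᵀ = β⁻¹ • S - (β⁻¹ * β⁻¹) • (S * SigY⁻¹ * S) ∧
    Rφ = β • (Qφ * Aᵀ * S⁻¹) ∧
    A *ᵥ (Rφ *ᵥ μY + bφ) = μY := by
  have hU : IsUnit (A * Aᵀ) := aux_isUnit_AAT A hA
  have hAAp : A * Ap = 1 := by
    rw [hAp, ← Matrix.mul_assoc, Matrix.mul_nonsing_inv _ ((Matrix.isUnit_iff_isUnit_det _).mp hU)]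
  have hApTAT : Apᵀ * Aᵀ = 1 := by
    rw [← Matrix.transpose_mul, hAAp, Matrix.transpose_one]
  have hSinv : S * S⁻¹ = 1 := Matrix.mul_nonsing_inv _ hS.det_pos.ne'.isUnit
  have hβne : β ≠ 0 := ne_of_gt hβ
  refine ⟨?_, ?_, ?_⟩
  · rw [hQφ]
    rw [Matrix.mul_smul, Matrix.smul_mul]
    rw [show A * (Ap * (S - β⁻¹ • (S * SigY⁻¹ * S)) * Apᵀ) * Aᵀ
        = (A * Ap) * (S - β⁻¹ • (S * SigY⁻¹ * S)) * (Apᵀ * Aᵀ) by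
      simp only [Matrix.mul_assoc]]
    rw [hAAp, hApTAT, Matrix.one_mul, Matrix.mul_one]
    rw [smul_sub, smul_smul]
  · rw [hQφ, hRφ]
    rw [Matrix.smul_mul, Matrix.smul_mul, smul_smul, mul_inv_cancel₀ hβne, one_smul]
    rw [show Ap * (S - β⁻¹ • (S * SigY⁻¹ * S)) * Apᵀ * Aᵀ * S⁻¹
        = Ap * ((S - β⁻¹ • (S * SigY⁻¹ * S)) * ((Apᵀ * Aᵀ) * S⁻¹)) by
      simp only [Matrix.mul_assoc]]
    rw [hApTAT, Matrix.one_mul, Matrix.sub_mul, Matrix.smul_mul]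
    rw [show S * SigY⁻¹ * S * S⁻¹ = S * SigY⁻¹ * (S * S⁻¹) by simp only [Matrix.mul_assoc]]
    rw [hSinv, Matrix.mul_one]
  · rw [hRφ, hbφ]
    have h1 : A *ᵥ ((Ap * (1 - β⁻¹ • (S * SigY⁻¹))) *ᵥ μY)
        = (1 - β⁻¹ • (S * SigY⁻¹)) *ᵥ μY := by
      rw [Matrix.mulVec_mulVec, ← Matrix.mul_assoc, hAAp, Matrix.one_mul]
    have h2 : A *ᵥ (β⁻¹ • (Ap *ᵥ (S *ᵥ (SigY⁻¹ *ᵥ μY))))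
        = β⁻¹ • ((S * SigY⁻¹) *ᵥ μY) := by
      rw [Matrix.mulVec_smul, Matrix.mulVec_mulVec, Matrix.mulVec_mulVec, Matrix.mulVec_mulVec,
        hAAp, Matrix.one_mul]
    rw [Matrix.mulVec_add, h1, h2, Matrix.sub_mulVec, Matrix.smul_mulVec,
      Matrix.one_mulVec]
    abel
end

section
/- For a linear Gaussian Markov chain Θ → Y → Z with all conditional covariances positive definite, the data processing inequality holds in closed form: I(Θ;Z) ≤ I(Θ;Y), where I(Θ;Y) = (1/2)log(|Σ_Y|/|S|) and I(Θ;Z) = (1/2)log(|Σ_Z|/|Σ_{Z|Θ}|) with Σ_Z = R_φΣ_YR_φᵀ + Q_φ and Σ_{Z|Θ} = R_φ S R_φᵀ + Q_φ. -/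
/-!
Write `Σ_Y = S + M` with `M = FᴴF` and `T = R S Rᵀ + Q`. The matrix determinant lemma turns the two
ratios into `|1 + F Rᵀ T⁻¹ R Fᴴ|` and `|1 + F S⁻¹ Fᴴ|`. The block matrix `[S⁻¹, Rᵀ; R, T]` is
positive semidefinite because the Schur complement of `S⁻¹` is `Q`; taking instead the Schur
complement of `T` gives `Rᵀ T⁻¹ R ≤ S⁻¹` in the Loewner order, and the determinant is monotone on
positive definite matrices.
-/

open Matrix
open scoped MatrixOrder ComplexOrder

namespace Matrix

variable {n k : Type*} [Fintype n] [DecidableEq n] [Fintype k] [DecidableEq k]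

theorem PosSemidef.one_le_det_one_add {E : Matrix n n ℝ} (hE : E.PosSemidef) :
    1 ≤ (1 + E).det := by
  have hE' := hE.isHermitian
  set U := hE'.eigenvectorUnitary
  have h : 1 + E = Unitary.conjStarAlgAut ℝ _ U (diagonal fun i => 1 + hE'.eigenvalues i) := by
    conv_lhs => rw [hE'.spectral_theorem, ← map_one (Unitary.conjStarAlgAut ℝ _ U), ← map_add]
    rw [← diagonal_one, diagonal_add]
    rfl
  rw [h, Unitary.conjStarAlgAut_apply, det_conj_of_mul_eq_one (Unitary.mul_star_self_of_mem U.2)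
    (Unitary.star_mul_self_of_mem U.2), det_diagonal]
  exact Finset.one_le_prod fun i _ => le_add_of_nonneg_right (hE.eigenvalues_nonneg i)

theorem PosDef.det_le_det_of_le {A B : Matrix n n ℝ} (hA : A.PosDef) (hAB : A ≤ B) :
    A.det ≤ B.det := by
  obtain ⟨F, hF⟩ := CStarAlgebra.nonneg_iff_eq_star_mul_self.mp (sub_nonneg.mpr hAB)
  have hB : B = A + Fᴴ * F := by rw [← star_eq_conjTranspose, ← hF, add_sub_cancel]
  rw [hB, det_add_mul _ _ (isUnit_iff_ne_zero.mpr hA.det_pos.ne')]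
  exact le_mul_of_one_le_right hA.det_pos.le
    (hA.posSemidef.inv.mul_mul_conjTranspose_same F).one_le_det_one_add

theorem conjTranspose_mul_inv_mul_le_inv {𝕜 : Type*} [RCLike 𝕜] {S : Matrix n n 𝕜}
    {Q : Matrix k k 𝕜} (R : Matrix k n 𝕜) (hS : S.PosDef) (hQ : Q.PosSemidef)
    (hT : (R * S * Rᴴ + Q).PosDef) :
    Rᴴ * (R * S * Rᴴ + Q)⁻¹ * R ≤ S⁻¹ := by
  have := hS.inv.isUnit.invertible
  have := hT.isUnit.invertible
  have hS' : S⁻¹⁻¹ = S := nonsing_inv_nonsing_inv S ((isUnit_iff_isUnit_det S).mp hS.isUnit)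
  have hblock : (fromBlocks S⁻¹ Rᴴ R (R * S * Rᴴ + Q)).PosSemidef := by
    simpa using (PosDef.fromBlocks₁₁ Rᴴ (R * S * Rᴴ + Q) hS.inv).mpr (by simpa [hS'] using hQ)
  exact le_iff.mpr <| by simpa using (PosDef.fromBlocks₂₂ S⁻¹ Rᴴ hT).mp (by simpa using hblock)

theorem det_div_det_channel_le {S M : Matrix n n ℝ} {Q : Matrix k k ℝ} (R : Matrix k n ℝ)
    (hS : S.PosDef) (hM : M.PosSemidef) (hQ : Q.PosSemidef) (hT : (R * S * Rᵀ + Q).PosDef) :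
    (R * (S + M) * Rᵀ + Q).det / (R * S * Rᵀ + Q).det ≤ (S + M).det / S.det := by
  obtain ⟨F, rfl⟩ := CStarAlgebra.nonneg_iff_eq_star_mul_self.mp hM.nonneg
  set T := R * S * Rᵀ + Q
  have hY : (S + star F * F).det / S.det = (1 + F * S⁻¹ * Fᴴ).det := by
    rw [star_eq_conjTranspose, det_add_mul _ _ (isUnit_iff_ne_zero.mpr hS.det_pos.ne'),
      mul_div_cancel_left₀ _ hS.det_pos.ne']
  have hZ : (R * (S + star F * F) * Rᵀ + Q).det / T.det = (1 + F * (Rᵀ * T⁻¹ * R) * Fᴴ).det := by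
    have hsplit : R * (S + star F * F) * Rᵀ + Q = T + (R * Fᴴ) * (F * Rᵀ) := by
      simp only [T, star_eq_conjTranspose, Matrix.mul_add, Matrix.add_mul, Matrix.mul_assoc]
      abel
    rw [hsplit, det_add_mul _ _ (isUnit_iff_ne_zero.mpr hT.det_pos.ne'),
      mul_div_cancel_left₀ _ hT.det_pos.ne']
    simp only [Matrix.mul_assoc]
  have hRS : Rᵀ * T⁻¹ * R ≤ S⁻¹ := by
    have hT' : (R * S * Rᴴ + Q).PosDef := by simpa [conjTranspose_eq_transpose_of_trivial] using hT
    simpa [conjTranspose_eq_transpose_of_trivial] using conjTranspose_mul_inv_mul_le_inv R hS hQ hT'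
  have hpsd : (F * (Rᵀ * T⁻¹ * R) * Fᴴ).PosSemidef := by
    have h := hT.posSemidef.inv.conjTranspose_mul_mul_same R
    rw [conjTranspose_eq_transpose_of_trivial] at h
    exact h.mul_mul_conjTranspose_same F
  rw [hY, hZ]
  exact (PosDef.one.add_posSemidef hpsd).det_le_det_of_le
    (add_le_add_right (star_right_conjugate_le_conjugate hRS F) 1)

end Matrix

/-- Data processing inequality in closed form for a linear Gaussian Markov chain
`Θ → Y → Z`: `I(Θ;Z) = ½ log(|Σ_Z|/|Σ_{Z|Θ}|) ≤ ½ log(|Σ_Y|/|S|) = I(Θ;Y)`, where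
`Σ_Y = AΣ_ΘAᵀ + S`, `Σ_Z = R_φΣ_YR_φᵀ + Q_φ`, `Σ_{Z|Θ} = R_φSR_φᵀ + Q_φ`. -/
theorem stmt17 {l m n : ℕ} (A : Matrix (Fin n) (Fin m) ℝ)
    (SigΘ : Matrix (Fin m) (Fin m) ℝ) (hSigΘ : SigΘ.PosSemidef)
    (S : Matrix (Fin n) (Fin n) ℝ) (hS : S.PosDef)
    (Rφ : Matrix (Fin l) (Fin n) ℝ) (Qφ : Matrix (Fin l) (Fin l) ℝ)
    (hQφ : Qφ.PosSemidef)
    (SigY : Matrix (Fin n) (Fin n) ℝ) (hSigY : SigY = A * SigΘ * Aᵀ + S)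
    (SigZ : Matrix (Fin l) (Fin l) ℝ) (hSigZ : SigZ = Rφ * SigY * Rφᵀ + Qφ)
    (SigZΘ : Matrix (Fin l) (Fin l) ℝ) (hSigZΘ : SigZΘ = Rφ * S * Rφᵀ + Qφ)
    (hSigZΘpd : SigZΘ.PosDef) :
    (1 / 2 : ℝ) * Real.log (SigZ.det / SigZΘ.det)
      ≤ (1 / 2) * Real.log (SigY.det / S.det) := by
  subst hSigY hSigZ hSigZΘ
  have hM : (A * SigΘ * Aᵀ).PosSemidef := by
    simpa [conjTranspose_eq_transpose_of_trivial] using hSigΘ.mul_mul_conjTranspose_same A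
  have hSigZpd : (Rφ * (S + A * SigΘ * Aᵀ) * Rφᵀ + Qφ).PosDef := by
    have h := hM.mul_mul_conjTranspose_same Rφ
    rw [conjTranspose_eq_transpose_of_trivial] at h
    convert hSigZΘpd.add_posSemidef h using 1
    simp only [Matrix.mul_add, Matrix.add_mul]
    abel
  rw [add_comm _ S]
  exact mul_le_mul_of_nonneg_left (Real.log_le_log (div_pos hSigZpd.det_pos hSigZΘpd.det_pos)
    (det_div_det_channel_le Rφ hS hM hQφ hSigZΘpd)) (by norm_num)
end
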